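/- arXiv:2107.11478 — 2 statements merged into one kernel-verified Lean document; each statement's English description precedes it below -/
import Mathlib

section
/- Every ℂ-derivation D of the dual numbers DualNumber ℂ is determined by its value on ε, and this value lies in the span of ε: precisely, the ℂ-linear map sending a derivation D : DualNumber ℂ → DualNumber ℂ to D(ε) is injective, its range is the ℂ-span of ε, and consequently the space of ℂ-derivations of DualNumber ℂ is one-dimensional over ℂ. -/
/-! A derivation kills `R` and is `R`-linear, so it is determined by `D ε`; applying it to
`ε * ε = 0` gives `2 ε D ε = 0`, which forces `D ε` into `R ε` when `R` has no 2-torsion.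
Conversely `a + b ε ↦ b ε` is a derivation. -/

/-- The ℂ-linear map sending a ℂ-derivation `D` of the dual numbers `ℂ[ε]`
to its value `D ε`. -/
noncomputable def evalEps :
    Derivation ℂ (DualNumber ℂ) (DualNumber ℂ) →ₗ[ℂ] DualNumber ℂ where
  toFun D := D DualNumber.eps
  map_add' _ _ := rfl
  map_smul' _ _ := rfl

namespace DualNumber

open TrivSqZeroExt

section Semiring

variable {R M : Type*} [CommSemiring R] [AddCommMonoid M] [Module R[ε] M] [Module R M]

theorem derivation_apply (D : Derivation R R[ε] M) (x : R[ε]) : D x = x.snd • D ε := by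
  conv_lhs => rw [← inl_fst_add_inr_snd_eq x]
  rw [map_add, ← algebraMap_eq_inl, D.map_algebraMap, inr_eq_smul_eps, D.map_smul, zero_add]

theorem derivation_ext {D₁ D₂ : Derivation R R[ε] M} (h : D₁ ε = D₂ ε) : D₁ = D₂ :=
  Derivation.ext fun x => by rw [derivation_apply D₁, derivation_apply D₂, h]

variable (R) in
noncomputable def sndDerivation : Derivation R R[ε] R[ε] where
  toLinearMap := (inrHom R R).comp (sndHom R R)
  map_one_eq_zero' := by simp
  leibniz' x y := by
    ext <;> simp [mul_comm]

theorem sndDerivation_eps : sndDerivation R ε = ε := rfl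

end Semiring

variable {R : Type*} [CommRing R] [NoZeroDivisors R] [CharZero R]

theorem fst_derivation_eps (D : Derivation R R[ε] R[ε]) : (D ε).fst = 0 := by
  have h := congrArg snd (D.leibniz ε ε)
  rw [eps_mul_eps, map_zero, snd_zero, smul_eq_mul, snd_add, snd_mul, fst_eps, snd_eps] at h
  simpa using h.symm

theorem derivation_eps_mem_span (D : Derivation R R[ε] R[ε]) : D ε ∈ R ∙ ε := by
  rw [Submodule.mem_span_singleton]
  refine ⟨(D ε).snd, ?_⟩
  rw [← inr_eq_smul_eps]
  ext
  · exact (fst_derivation_eps D).symm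
  · rfl

end DualNumber

open DualNumber in
/-- Every ℂ-derivation of `DualNumber ℂ` is determined by its value on `ε`, this value
lies in the ℂ-span of `ε`, and the space of ℂ-derivations of `DualNumber ℂ` is
one-dimensional over ℂ. -/
theorem stmt_0 :
    Function.Injective evalEps ∧
    LinearMap.range evalEps =
      (Submodule.span ℂ {DualNumber.eps} : Submodule ℂ (DualNumber ℂ)) ∧
    Module.finrank ℂ (Derivation ℂ (DualNumber ℂ) (DualNumber ℂ)) = 1 := by
  have hinj : Function.Injective evalEps := fun _ _ => derivation_ext
  have hrange : LinearMap.range evalEps = ℂ ∙ ε := by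
    refine le_antisymm ?_ ?_
    · rintro _ ⟨D, rfl⟩
      exact derivation_eps_mem_span D
    · rw [Submodule.span_singleton_le_iff_mem]
      exact ⟨sndDerivation ℂ, sndDerivation_eps⟩
  have heps : (ε : ℂ[ε]) ≠ 0 := fun h => one_ne_zero (congrArg TrivSqZeroExt.snd h)
  refine ⟨hinj, hrange, ?_⟩
  rw [(LinearEquiv.ofInjective evalEps hinj).finrank_eq, hrange, finrank_span_singleton heps]
end

section
/- Every ℂ-derivation D of the product algebra DualNumber ℂ × DualNumber ℂ satisfies: there exist λ₁, λ₂ ∈ ℂ with D(ε, 0) = λ₁ • (ε, 0) and D(0, ε) = λ₂ • (0, ε), and D is uniquely determined by the pair (λ₁, λ₂); hence the space of ℂ-derivations of DualNumber ℂ × DualNumber ℂ is two-dimensional over ℂ. -/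
/-!
Idempotents are killed by every derivation, so a derivation `D` of `K[ε] × K[ε]` kills
`(1, 0)` and `(0, 1)` and hence preserves each factor. Since `(ε, 0)² = 0`, the Leibniz rule
gives `2 (ε, 0) • D (ε, 0) = 0`; with `2` invertible this forces `D (ε, 0) ∈ K • (ε, 0)`, and
likewise for `(0, ε)`. Conversely, `ε ∂/∂ε` on either factor is a derivation, so every pair of
coefficients occurs.
-/

open scoped DualNumber
open TrivSqZeroExt

namespace Derivation

section
variable {R A M : Type*} [CommSemiring R] [CommSemiring A] [AddCommMonoid M] [Algebra R A]
  [Module A M] [Module R M] (D : Derivation R A M)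

theorem map_eq_zero_of_isIdempotentElem [IsLeftCancelAdd M] {e : A} (he : IsIdempotentElem e) :
    D e = 0 := by
  have hD : D e = e • D e + e • D e := by rw [← D.leibniz, he.eq]
  have : e • D e = e • D e + e • D e := by
    conv_lhs => rw [hD]
    rw [smul_add, smul_smul, he.eq]
  rw [hD, left_eq_add.mp this, add_zero]

theorem map_mul_of_isIdempotentElem [IsLeftCancelAdd M] {e : A} (he : IsIdempotentElem e)
    (x : A) : D (e * x) = e • D x := by
  rw [D.leibniz, D.map_eq_zero_of_isIdempotentElem he, smul_zero, add_zero]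

theorem smul_map_self_eq_zero_of_mul_self_eq_zero (h2 : IsUnit (2 : R)) {a : A}
    (ha : a * a = 0) : a • D a = 0 := by
  have : (2 : R) • (a • D a) = 0 := by
    rw [ofNat_smul_eq_nsmul, two_nsmul, ← D.leibniz, ha, D.map_zero]
  exact h2.smul_eq_zero.mp this

end

section
variable {R A B : Type*} [CommSemiring R] [CommSemiring A] [CommSemiring B] [Algebra R A]
  [Algebra R B]

def prodMap (D₁ : Derivation R A A) (D₂ : Derivation R B B) :
    Derivation R (A × B) (A × B) where
  toLinearMap := D₁.toLinearMap.prodMap D₂.toLinearMap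
  map_one_eq_zero' := by simp
  leibniz' x y := by ext <;> simp [D₁.leibniz, D₂.leibniz]

@[simp]
theorem prodMap_apply (D₁ : Derivation R A A) (D₂ : Derivation R B B) (x : A × B) :
    D₁.prodMap D₂ x = (D₁ x.1, D₂ x.2) := rfl

end

section
variable {R A B : Type*} [CommSemiring R] [CommRing A] [CommRing B] [Algebra R A]
  [Algebra R B] (D : Derivation R (A × B) (A × B))

theorem snd_map_mk_zero (a : A) : (D (a, 0)).2 = 0 := by
  have h := D.map_mul_of_isIdempotentElem (e := ((1, 0) : A × B))
    (Prod.ext (mul_one _) (mul_zero _)) (a, 0)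
  simpa using congrArg Prod.snd h

theorem fst_map_zero_mk (b : B) : (D (0, b)).1 = 0 := by
  have h := D.map_mul_of_isIdempotentElem (e := ((0, 1) : A × B))
    (Prod.ext (mul_zero _) (mul_one _)) (0, b)
  simpa using congrArg Prod.fst h

end

end Derivation

namespace DualNumber

theorem eq_smul_eps_of_eps_mul_eq_zero {R : Type*} [Semiring R] {x : R[ε]} (hx : ε * x = 0) :
    x = x.snd • ε := by
  have : x.fst = 0 := by simpa using congrArg snd hx
  ext <;> simp [this]

section
variable (R : Type*) [CommSemiring R]

def epsDerivation : Derivation R R[ε] R[ε] where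
  toLinearMap := inrHom R R ∘ₗ sndHom R R
  map_one_eq_zero' := by simp
  leibniz' x y := by
    ext
    · simp [fst_mul]
    · simp [add_comm, mul_comm]

@[simp]
theorem epsDerivation_apply (x : R[ε]) : epsDerivation R x = x.snd • ε := by
  simp [epsDerivation, inr_eq_smul_eps]

end

section
variable {R : Type*} [CommSemiring R]

def derivationProdCoeffs : Derivation R (R[ε] × R[ε]) (R[ε] × R[ε]) →ₗ[R] R × R where
  toFun D := ((D (ε, 0)).1.snd, (D (0, ε)).2.snd)
  map_add' _ _ := rfl
  map_smul' _ _ := rfl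

@[simp]
theorem derivationProdCoeffs_apply (D : Derivation R (R[ε] × R[ε]) (R[ε] × R[ε])) :
    derivationProdCoeffs D = ((D (ε, 0)).1.snd, (D (0, ε)).2.snd) := rfl

end

section
variable {R : Type*} [CommRing R]

theorem derivation_prod_ext {D₁ D₂ : Derivation R (R[ε] × R[ε]) (R[ε] × R[ε])}
    (h₁ : D₁ (ε, 0) = D₂ (ε, 0)) (h₂ : D₁ (0, ε) = D₂ (0, ε)) : D₁ = D₂ := by
  have hidem₁ : IsIdempotentElem ((1, 0) : R[ε] × R[ε]) := Prod.ext (mul_one _) (mul_zero _)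
  have hidem₂ : IsIdempotentElem ((0, 1) : R[ε] × R[ε]) := Prod.ext (mul_zero _) (mul_one _)
  refine Derivation.ext fun x => ?_
  have hx : x = x.1.fst • ((1, 0) : R[ε] × R[ε]) + x.1.snd • (ε, 0) + x.2.fst • (0, 1)
      + x.2.snd • (0, ε) := by
    ext <;> simp
  rw [hx]
  simp only [map_add, Derivation.map_smul, Derivation.map_eq_zero_of_isIdempotentElem _ hidem₁,
    Derivation.map_eq_zero_of_isIdempotentElem _ hidem₂, h₁, h₂]

end

variable {K : Type*} [Field K] [NeZero (2 : K)]

theorem derivation_prod_map_eps_zero (D : Derivation K (K[ε] × K[ε]) (K[ε] × K[ε])) :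
    D (ε, 0) = (D (ε, 0)).1.snd • (ε, 0) := by
  have h := congrArg Prod.fst <| D.smul_map_self_eq_zero_of_mul_self_eq_zero
    (NeZero.ne (2 : K)).isUnit (a := (ε, 0)) (by simp)
  ext1
  · simpa using eq_smul_eps_of_eps_mul_eq_zero h
  · simpa using D.snd_map_mk_zero ε

theorem derivation_prod_map_zero_eps (D : Derivation K (K[ε] × K[ε]) (K[ε] × K[ε])) :
    D (0, ε) = (D (0, ε)).2.snd • (0, ε) := by
  have h := congrArg Prod.snd <| D.smul_map_self_eq_zero_of_mul_self_eq_zero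
    (NeZero.ne (2 : K)).isUnit (a := (0, ε)) (by simp)
  ext1
  · simpa using D.fst_map_zero_mk ε
  · simpa using eq_smul_eps_of_eps_mul_eq_zero h

theorem derivationProdCoeffs_bijective :
    Function.Bijective
      (derivationProdCoeffs : Derivation K (K[ε] × K[ε]) (K[ε] × K[ε]) →ₗ[K] K × K) := by
  refine ⟨fun D₁ D₂ h => ?_,
    fun l => ⟨(l.1 • epsDerivation K).prodMap (l.2 • epsDerivation K), ?_⟩⟩
  · obtain ⟨h₁, h₂⟩ := Prod.ext_iff.mp h
    refine derivation_prod_ext ?_ ?_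
    · rw [derivation_prod_map_eps_zero D₁, derivation_prod_map_eps_zero D₂]
      exact congrArg (· • _) h₁
    · rw [derivation_prod_map_zero_eps D₁, derivation_prod_map_zero_eps D₂]
      exact congrArg (· • _) h₂
  · simp

theorem finrank_derivation_prod :
    Module.finrank K (Derivation K (K[ε] × K[ε]) (K[ε] × K[ε])) = 2 := by
  rw [(LinearEquiv.ofBijective _ derivationProdCoeffs_bijective).finrank_eq]
  simp

end DualNumber

/-- Every ℂ-derivation `D` of `ℂ[ε] × ℂ[ε]` satisfies `D (ε, 0) = λ₁ • (ε, 0)` and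
`D (0, ε) = λ₂ • (0, ε)` for some `λ₁, λ₂ ∈ ℂ`, and is uniquely determined by its
values on `(ε, 0)` and `(0, ε)`; hence the space of ℂ-derivations of `ℂ[ε] × ℂ[ε]` is
two-dimensional over ℂ. -/
theorem stmt_8 :
    (∀ D : Derivation ℂ (DualNumber ℂ × DualNumber ℂ) (DualNumber ℂ × DualNumber ℂ),
      ∃ l₁ l₂ : ℂ,
        D ((DualNumber.eps : DualNumber ℂ), (0 : DualNumber ℂ)) =
          l₁ • (((DualNumber.eps : DualNumber ℂ), (0 : DualNumber ℂ)) :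
            DualNumber ℂ × DualNumber ℂ) ∧
        D ((0 : DualNumber ℂ), (DualNumber.eps : DualNumber ℂ)) =
          l₂ • (((0 : DualNumber ℂ), (DualNumber.eps : DualNumber ℂ)) :
            DualNumber ℂ × DualNumber ℂ)) ∧
    (∀ D₁ D₂ : Derivation ℂ (DualNumber ℂ × DualNumber ℂ) (DualNumber ℂ × DualNumber ℂ),
      D₁ ((DualNumber.eps : DualNumber ℂ), (0 : DualNumber ℂ)) =
        D₂ ((DualNumber.eps : DualNumber ℂ), (0 : DualNumber ℂ)) →
      D₁ ((0 : DualNumber ℂ), (DualNumber.eps : DualNumber ℂ)) =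
        D₂ ((0 : DualNumber ℂ), (DualNumber.eps : DualNumber ℂ)) →
      D₁ = D₂) ∧
    Module.finrank ℂ
      (Derivation ℂ (DualNumber ℂ × DualNumber ℂ) (DualNumber ℂ × DualNumber ℂ)) = 2 :=
  ⟨fun D => ⟨_, _, DualNumber.derivation_prod_map_eps_zero D,
      DualNumber.derivation_prod_map_zero_eps D⟩,
    fun _ _ => DualNumber.derivation_prod_ext, DualNumber.finrank_derivation_prod⟩
end
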